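/- arXiv:1103.0491 — 2 statements merged into one kernel-verified Lean document; each statement's English description precedes it below -/
import Mathlib

section
/- For every u₁ > 0 and every k with 2 ≤ k ≤ n, the derivative with respect to u₁ of the function u₁ ↦ (U_k(u₁) − U_{k−1}(u₁))/g₁(U_k(u₁)) is strictly negative. -/
/-!
The derivatives `W_k = U_k'` satisfy the linearised recursion
`W_{k+1} = 2 W_k - W_{k-1} + h² g'(U_k) W_k`, and the derivative of `(U_k - U_{k-1}) / g(U_k)` has
the sign of `(W_k - W_{k-1}) g(U_k) - (U_k - U_{k-1}) g'(U_k) W_k`. By induction on `k`, `U_k` and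
`W_k` increase and this quantity stays negative; the inductive step only uses the strict convexity
of `g` on `(0, ∞)`, through `g(U_{k+1}) < g(U_k) + g'(U_{k+1}) (U_{k+1} - U_k)` and
`g'(U_k) < g'(U_{k+1})`.
-/

open Finset

noncomputable def U (g1 : ℝ → ℝ) (h : ℝ) : ℕ → ℝ → ℝ
  | 0, u => u
  | 1, u => u
  | 2, u => u + h ^ 2 / 2 * g1 u
  | k + 3, u => 2 * U g1 h (k + 2) u - U g1 h (k + 1) u + h ^ 2 * g1 (U g1 h (k + 2) u)

open Set

noncomputable def dU (g : ℝ → ℝ) (h : ℝ) : ℕ → ℝ → ℝ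
  | 0, _ => 1
  | 1, _ => 1
  | 2, u => 1 + h ^ 2 / 2 * deriv g u
  | k + 3, u => 2 * dU g h (k + 2) u - dU g h (k + 1) u
      + h ^ 2 * (deriv g (U g h (k + 2) u) * dU g h (k + 2) u)

theorem hasDerivAt_U {g : ℝ → ℝ} (hg : Differentiable ℝ g) (h : ℝ) (u : ℝ) :
    ∀ k, HasDerivAt (U g h k) (dU g h k u) u
  | 0 => by simpa [U, dU] using hasDerivAt_id' u
  | 1 => by simpa [U, dU] using hasDerivAt_id' u
  | 2 =>
    ((hasDerivAt_id' u).add ((hg u).hasDerivAt.const_mul (h ^ 2 / 2)) :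
      HasDerivAt (fun x => x + h ^ 2 / 2 * g x) _ u)
  | k + 3 => by
    have hk2 := hasDerivAt_U hg h u (k + 2)
    have hk1 := hasDerivAt_U hg h u (k + 1)
    have hgk2 := (hg (U g h (k + 2) u)).hasDerivAt.comp u hk2
    exact (((hk2.const_mul 2).sub hk1).add (hgk2.const_mul (h ^ 2)) :
      HasDerivAt (fun x => 2 * U g h (k + 2) x - U g h (k + 1) x + h ^ 2 * g (U g h (k + 2) x)) _ u)

theorem StrictConvexOn.sub_lt_deriv_mul_sub {S : Set ℝ} {f : ℝ → ℝ} {x y : ℝ}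
    (hfc : StrictConvexOn ℝ S f) (hx : x ∈ S) (hy : y ∈ S) (hxy : x < y)
    (hfd : DifferentiableAt ℝ f y) : f y - f x < deriv f y * (y - x) := by
  have := hfc.slope_lt_deriv hx hy hxy hfd
  rwa [slope_def_field, div_lt_iff₀ (sub_pos.mpr hxy)] at this

/-- Only weak inequalities are assumed so that the first step of the recursion is the case
`a = b`, `w = v = 1`, `c = h² / 2`. -/
theorem shooting_step {g : ℝ → ℝ} (hconv : StrictConvexOn ℝ (Ioi 0) g)
    (hdiff : Differentiable ℝ g) {a b b' w v v' c : ℝ} (hc : 0 < c) (hb : 0 < b)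
    (hgb : 0 < g b) (hg'b : 0 < deriv g b) (hab : a ≤ b) (hwv : w ≤ v) (hv : 0 < v)
    (hinv : (v - w) * g b ≤ (b - a) * (deriv g b * v))
    (hb' : b' = 2 * b - a + c * g b) (hv' : v' = 2 * v - w + c * (deriv g b * v)) :
    b < b' ∧ v < v' ∧ (v' - v) * g b' < (b' - b) * (deriv g b' * v') := by
  have hbb' : b < b' := by rw [hb']; nlinarith
  have hvv' : v < v' := by rw [hv']; nlinarith [mul_pos hg'b hv]
  have hchord := hconv.sub_lt_deriv_mul_sub hb (hb.trans hbb') hbb' (hdiff b')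
  have hmono : deriv g b < deriv g b' :=
    hconv.strictMonoOn_deriv (fun x _ => hdiff x) hb (hb.trans hbb') hbb'
  have hincr : (v' - v) * g b ≤ (b' - b) * (deriv g b * v) := by
    rw [hb', hv']; nlinarith
  refine ⟨hbb', hvv', ?_⟩
  calc (v' - v) * g b' < (v' - v) * (g b + deriv g b' * (b' - b)) := by
        gcongr
        linarith
    _ = (v' - v) * g b + (b' - b) * (deriv g b' * (v' - v)) := by ring
    _ < (b' - b) * (deriv g b' * v) + (b' - b) * (deriv g b' * (v' - v)) := by
        gcongr ?_ + _
        calc (v' - v) * g b ≤ (b' - b) * (deriv g b * v) := hincr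
          _ < (b' - b) * (deriv g b' * v) := by gcongr
    _ = (b' - b) * (deriv g b' * v') := by ring

theorem shooting_invariant {g : ℝ → ℝ} (hconv : StrictConvexOn ℝ (Ioi 0) g)
    (hdiff : Differentiable ℝ g) (hpos : ∀ x > 0, 0 < g x) (hderiv : ∀ x > 0, 0 < deriv g x)
    {h u : ℝ} (hh : h ≠ 0) (hu : 0 < u) :
    ∀ m : ℕ, 0 < U g h (m + 2) u ∧ U g h (m + 1) u < U g h (m + 2) u ∧
      0 < dU g h (m + 2) u ∧ dU g h (m + 1) u < dU g h (m + 2) u ∧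
      (dU g h (m + 2) u - dU g h (m + 1) u) * g (U g h (m + 2) u) <
        (U g h (m + 2) u - U g h (m + 1) u) * (deriv g (U g h (m + 2) u) * dU g h (m + 2) u)
  | 0 => by
    obtain ⟨hlt, hdlt, hinv⟩ := shooting_step hconv hdiff (a := u) (b' := U g h 2 u) (w := 1)
      (v' := dU g h 2 u) (c := h ^ 2 / 2)
      (by positivity) hu (hpos u hu) (hderiv u hu) le_rfl le_rfl one_pos (by simp)
      (by simp only [U]; ring) (by simp only [dU]; ring)
    simp only [U, dU] at hlt hdlt hinv ⊢
    exact ⟨hu.trans hlt, hlt, one_pos.trans hdlt, hdlt, hinv⟩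
  | m + 1 => by
    obtain ⟨hb, hab, hv, hwv, hinv⟩ := shooting_invariant hconv hdiff hpos hderiv hh hu m
    obtain ⟨hlt, hdlt, hinv'⟩ := shooting_step hconv hdiff (c := h ^ 2) (sq_pos_of_ne_zero hh)
      hb (hpos _ hb) (hderiv _ hb) hab.le hwv.le hv hinv.le rfl rfl
    exact ⟨hb.trans hlt, hlt, hv.trans hdlt, hdlt, hinv'⟩

theorem deriv_increment_div_neg {g : ℝ → ℝ} (hconv : StrictConvexOn ℝ (Ioi 0) g)
    (hdiff : Differentiable ℝ g) (hpos : ∀ x > 0, 0 < g x) (hderiv : ∀ x > 0, 0 < deriv g x)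
    {h u : ℝ} (hh : h ≠ 0) (hu : 0 < u) (m : ℕ) :
    deriv (fun x => (U g h (m + 2) x - U g h (m + 1) x) / g (U g h (m + 2) x)) u < 0 := by
  obtain ⟨hb, -, -, -, hinv⟩ := shooting_invariant hconv hdiff hpos hderiv hh hu m
  have hquot : HasDerivAt (fun x => (U g h (m + 2) x - U g h (m + 1) x) / g (U g h (m + 2) x))
      _ u := ((hasDerivAt_U hdiff h u (m + 2)).sub (hasDerivAt_U hdiff h u (m + 1))).div
    ((hdiff _).hasDerivAt.comp u (hasDerivAt_U hdiff h u (m + 2))) (hpos _ hb).ne'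
  rw [hquot.deriv]
  exact div_neg_of_neg_of_pos (sub_neg.mpr hinv) (pow_pos (hpos _ hb) 2)

theorem stmt5_general
    (g1 : ℝ → ℝ)
    (hg1C : ContDiff ℝ 3 g1)
    (hg10 : g1 0 = 0)
    (hg1d1 : ∀ x > 0, 0 < deriv g1 x)
    (hg1d2 : ∀ x > 0, 0 < iteratedDeriv 2 g1 x)
    (n : ℕ) (hn : 2 ≤ n) (h : ℝ) (hh : h = 1 / ((n : ℝ) - 1))
    (u1 : ℝ) (hu1 : 0 < u1) (k : ℕ) (hk2 : 2 ≤ k) :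
    deriv (fun x => (U g1 h k x - U g1 h (k - 1) x) / g1 (U g1 h k x)) u1 < 0 := by
  have hh0 : h ≠ 0 := by
    have : (1 : ℝ) < n := by exact_mod_cast hn
    rw [hh]
    exact one_div_ne_zero (by linarith)
  have hdiff : Differentiable ℝ g1 := hg1C.differentiable (by norm_num)
  have hconv : StrictConvexOn ℝ (Ioi 0) g1 :=
    strictConvexOn_of_deriv2_pos' (convex_Ioi 0) hg1C.continuous.continuousOn
      fun x hx => by simpa only [iteratedDeriv_eq_iterate] using hg1d2 x hx
  have hmono : StrictMonoOn g1 (Ici 0) :=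
    strictMonoOn_of_deriv_pos (convex_Ici 0) hg1C.continuous.continuousOn
      fun x hx => hg1d1 x (by rwa [interior_Ici] at hx)
  have hpos : ∀ x > 0, 0 < g1 x := fun x hx =>
    hg10 ▸ hmono self_mem_Ici (mem_Ici.mpr hx.le) hx
  obtain ⟨m, rfl⟩ : ∃ m, k = m + 2 := ⟨k - 2, by omega⟩
  exact deriv_increment_div_neg hconv hdiff hpos hg1d1 hh0 hu1 m

theorem stmt5
    (g1 g2 : ℝ → ℝ)
    (hg1C : ContDiff ℝ 3 g1) (hg2C : ContDiff ℝ 3 g2)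
    (hg1A : AnalyticAt ℝ g1 0) (hg2A : AnalyticAt ℝ g2 0)
    (hg10 : g1 0 = 0) (hg20 : g2 0 = 0)
    (hg1d1 : ∀ x > 0, 0 < deriv g1 x) (hg2d1 : ∀ x > 0, 0 < deriv g2 x)
    (hg1d2 : ∀ x > 0, 0 < iteratedDeriv 2 g1 x) (hg2d2 : ∀ x > 0, 0 < iteratedDeriv 2 g2 x)
    (hg1d3 : ∀ x > 0, 0 ≤ iteratedDeriv 3 g1 x) (hg2d3 : ∀ x > 0, 0 ≤ iteratedDeriv 3 g2 x)
    (n : ℕ) (hn : 2 ≤ n) (h : ℝ) (hh : h = 1 / ((n : ℝ) - 1))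
    (u1 : ℝ) (hu1 : 0 < u1) (k : ℕ) (hk2 : 2 ≤ k) (hkn : k ≤ n) :
    deriv (fun x => (U g1 h k x - U g1 h (k - 1) x) / g1 (U g1 h k x)) u1 < 0 :=
  stmt5_general g1 hg1C hg10 hg1d1 hg1d2 n hn h hh u1 hu1 k hk2
end

section
/- Fix α > 0 and an integer n ≥ 2. If the function g := g₁/g₂ is surjective from (0, ∞) onto (0, ∞), then the discrete system (S) with parameter α has a positive solution, i.e., there exists u = (u₁, …, u_n) ∈ (0, ∞)ⁿ such that (α, u₁, …, u_n) solves (S). -/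
open Finset

lemma U_rec (g1 : ℝ → ℝ) (h : ℝ) (k : ℕ) (hk : 1 ≤ k) (u : ℝ) :
    U g1 h (k+2) u = 2 * U g1 h (k+1) u - U g1 h k u + h^2 * g1 (U g1 h (k+1) u) := by
  obtain ⟨j, rfl⟩ : ∃ j, k = j + 1 := ⟨k - 1, by omega⟩
  rfl

lemma contU (g1 : ℝ → ℝ) (hg1 : Continuous g1) (h : ℝ) : ∀ k, Continuous (U g1 h k) := by
  intro k
  induction k using Nat.strong_induction_on with
  | _ k ih =>
    match k with
    | 0 => exact continuous_id
    | 1 => exact continuous_id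
    | 2 =>
      show Continuous (fun u => u + h ^ 2 / 2 * g1 u)
      fun_prop
    | k+3 =>
      have h1 := ih (k+1) (by omega)
      have h2 := ih (k+2) (by omega)
      show Continuous (fun u => 2 * U g1 h (k + 2) u - U g1 h (k + 1) u +
        h ^ 2 * g1 (U g1 h (k + 2) u))
      fun_prop

lemma U_zero (g1 : ℝ → ℝ) (hg0 : g1 0 = 0) (h : ℝ) : ∀ k, U g1 h k 0 = 0 := by
  intro k
  induction k using Nat.strong_induction_on with
  | _ k ih =>
    match k with
    | 0 => rfl
    | 1 => rfl
    | 2 => show (0:ℝ) + h ^ 2 / 2 * g1 0 = 0; rw [hg0]; ring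
    | k+3 =>
      have h1 := ih (k+1) (by omega)
      have h2 := ih (k+2) (by omega)
      show 2 * U g1 h (k + 2) 0 - U g1 h (k + 1) 0 + h ^ 2 * g1 (U g1 h (k + 2) 0) = 0
      rw [h1, h2, hg0]; ring

section Mono
variable {g1 : ℝ → ℝ} {h a : ℝ}
variable (hm : MonotoneOn g1 (Set.Ici 0)) (hg0 : g1 0 = 0) (ha : 0 < a)

include hm hg0 ha

lemma U_mono : ∀ k, 1 ≤ k → 0 < U g1 h k a ∧ U g1 h k a ≤ U g1 h (k+1) a := by
  intro k hk
  induction k, hk using Nat.le_induction with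
  | base =>
    refine ⟨ha, ?_⟩
    have : g1 0 ≤ g1 a := hm (by simp) (le_of_lt ha) ha.le
    show a ≤ a + h ^ 2 / 2 * g1 a
    nlinarith [sq_nonneg h]
  | succ k hk ih =>
    obtain ⟨hpos, hle⟩ := ih
    have hpos' : 0 < U g1 h (k+1) a := lt_of_lt_of_le hpos hle
    refine ⟨hpos', ?_⟩
    have hg : 0 ≤ g1 (U g1 h (k+1) a) := by
      have := hm (Set.mem_Ici.mpr le_rfl) (Set.mem_Ici.mpr hpos'.le) hpos'.le
      linarith [hg0 ▸ this]
    have := U_rec g1 h k hk a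
    nlinarith [sq_nonneg h]

lemma U_pos : ∀ k, 1 ≤ k → 0 < U g1 h k a := fun k hk => (U_mono hm hg0 ha k hk).1

lemma le_U : ∀ k, 1 ≤ k → a ≤ U g1 h k a := by
  intro k hk
  induction k, hk using Nat.le_induction with
  | base => exact le_rfl
  | succ k hk ih => exact le_trans ih (U_mono hm hg0 ha k hk).2

lemma U_dbound : ∀ k, 1 ≤ k →
    U g1 h (k+1) a - U g1 h k a ≤ ((k:ℝ) - 1/2) * h^2 * g1 (U g1 h (k+1) a) := by
  intro k hk
  induction k, hk using Nat.le_induction with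
  | base =>
    have h1 : a ≤ U g1 h 2 a := (U_mono hm hg0 ha 1 le_rfl).2
    have hg : g1 a ≤ g1 (U g1 h 2 a) := hm (le_of_lt ha) (Set.mem_Ici.mpr (ha.le.trans h1)) h1
    show (a + h ^ 2 / 2 * g1 a) - a ≤ (((1:ℕ):ℝ) - 1/2) * h^2 * g1 (U g1 h 2 a)
    push_cast
    nlinarith [sq_nonneg h]
  | succ k hk ih =>
    have hle := (U_mono (h:=h) hm hg0 ha (k+1) (by omega)).2
    have hpos1 := (U_mono (h:=h) hm hg0 ha (k+1) (by omega)).1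
    have hpos2 : 0 < U g1 h (k+2) a := lt_of_lt_of_le hpos1 hle
    have hg : g1 (U g1 h (k+1) a) ≤ g1 (U g1 h (k+2) a) :=
      hm (Set.mem_Ici.mpr hpos1.le) (Set.mem_Ici.mpr hpos2.le) hle
    have hgn : 0 ≤ g1 (U g1 h (k+1) a) := by
      have := hm (Set.mem_Ici.mpr le_rfl) (Set.mem_Ici.mpr hpos1.le) hpos1.le
      linarith [hg0 ▸ this]
    have hrec := U_rec g1 h k hk a
    have hk' : (1:ℝ) ≤ (k:ℝ) := by exact_mod_cast hk
    have e : U g1 h (k+1+1) a = U g1 h (k+2) a := rfl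
    rw [e]
    push_cast
    nlinarith [sq_nonneg h, mul_nonneg (mul_nonneg (by linarith : (0:ℝ) ≤ (k:ℝ)+1/2) (sq_nonneg h))
      (by linarith : (0:ℝ) ≤ g1 (U g1 h (k+2) a) - g1 (U g1 h (k+1) a))]

end Mono

/-- `(α, u 1, …, u n)` is a positive solution of the discrete system (S). -/
def IsSolution (g1 g2 : ℝ → ℝ) (n : ℕ) (h α : ℝ) (u : ℕ → ℝ) : Prop :=
  (∀ k, 1 ≤ k → k ≤ n → 0 < u k) ∧
  u 2 - u 1 = h ^ 2 / 2 * g1 (u 1) ∧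
  (∀ k, 2 ≤ k → k ≤ n - 1 → u (k + 1) - 2 * u k + u (k - 1) = h ^ 2 * g1 (u k)) ∧
  u n - u (n - 1) + h ^ 2 / 2 * g1 (u n) = h * α * g2 (u n)

theorem stmt9
    (g1 g2 : ℝ → ℝ)
    (hg1C : ContDiff ℝ 3 g1) (hg2C : ContDiff ℝ 3 g2)
    (hg1A : AnalyticAt ℝ g1 0) (hg2A : AnalyticAt ℝ g2 0)
    (hg10 : g1 0 = 0) (hg20 : g2 0 = 0)
    (hg1d1 : ∀ x > 0, 0 < deriv g1 x) (hg2d1 : ∀ x > 0, 0 < deriv g2 x)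
    (hg1d2 : ∀ x > 0, 0 < iteratedDeriv 2 g1 x) (hg2d2 : ∀ x > 0, 0 < iteratedDeriv 2 g2 x)
    (hg1d3 : ∀ x > 0, 0 ≤ iteratedDeriv 3 g1 x) (hg2d3 : ∀ x > 0, 0 ≤ iteratedDeriv 3 g2 x)
    (n : ℕ) (hn : 2 ≤ n) (h : ℝ) (hh : h = 1 / ((n : ℝ) - 1))
    (α : ℝ) (hα : 0 < α)
    (hsurj : ∀ y > (0 : ℝ), ∃ x > (0 : ℝ), g1 x / g2 x = y) :
    ∃ u : ℕ → ℝ, IsSolution g1 g2 n h α u := by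
  obtain ⟨m, rfl⟩ : ∃ m, n = m + 2 := ⟨n - 2, by omega⟩
  have hden : (0:ℝ) < (m:ℝ) + 1 := by positivity
  have hh' : h = 1 / ((m:ℝ) + 1) := by rw [hh]; push_cast; ring_nf
  have hpos : 0 < h := by rw [hh']; positivity
  have hmh : ((m:ℝ) + 1) * h = 1 := by rw [hh']; field_simp
  have h2eq : ((m:ℝ) + 1) * h ^ 2 = h := by rw [pow_two, ← mul_assoc, hmh, one_mul]
  -- monotonicity of g1, g2
  have sm1 : StrictMonoOn g1 (Set.Ici 0) :=
    strictMonoOn_of_deriv_pos (convex_Ici 0) hg1C.continuous.continuousOn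
      (by rw [interior_Ici]; exact fun x hx => hg1d1 x hx)
  have sm2 : StrictMonoOn g2 (Set.Ici 0) :=
    strictMonoOn_of_deriv_pos (convex_Ici 0) hg2C.continuous.continuousOn
      (by rw [interior_Ici]; exact fun x hx => hg2d1 x hx)
  have hm1 : MonotoneOn g1 (Set.Ici 0) := sm1.monotoneOn
  have g2pos : ∀ x > (0:ℝ), 0 < g2 x := by
    intro x hx
    have := sm2 Set.self_mem_Ici (Set.mem_Ici.mpr hx.le) hx
    rwa [hg20] at this
  -- the shooting function
  obtain ⟨f, hf⟩ : ∃ F : ℝ → ℝ, F = U g1 h (m + 2) := ⟨_, rfl⟩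
  have fcont : Continuous f := hf ▸ contU g1 hg1C.continuous h (m + 2)
  have f0 : f 0 = 0 := hf ▸ U_zero g1 hg10 h (m + 2)
  have fge : ∀ a > (0:ℝ), a ≤ f a := fun a ha => hf ▸ le_U hm1 hg10 ha (m + 2) (by omega)
  have fpos : ∀ a > (0:ℝ), 0 < f a := fun a ha => lt_of_lt_of_le ha (fge a ha)
  obtain ⟨Φ, hΦ⟩ : ∃ F : ℝ → ℝ, F = fun a =>
    U g1 h (m + 2) a - U g1 h (m + 1) a + h ^ 2 / 2 * g1 (f a) - h * α * g2 (f a) := ⟨_, rfl⟩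
  have Φcont : Continuous Φ := by
    rw [hΦ]
    apply Continuous.sub
    · exact ((contU g1 hg1C.continuous h (m+2)).sub (contU g1 hg1C.continuous h (m+1))).add
        (continuous_const.mul (hg1C.continuous.comp fcont))
    · exact continuous_const.mul (hg2C.continuous.comp fcont)
  -- bounds on Φ
  have hub : ∀ a > (0:ℝ), Φ a ≤ h * g1 (f a) - h * α * g2 (f a) := by
    intro a ha
    have hdb := U_dbound (h:=h) hm1 hg10 ha (m + 1) (by omega)
    have e : U g1 h (m + 1 + 1) a = f a := by rw [hf]
    rw [e] at hdb
    push_cast at hdb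
    have hkey : ((m:ℝ) + 1 - 1/2) * h^2 * g1 (f a) + h^2/2 * g1 (f a) = h * g1 (f a) := by
      linear_combination g1 (f a) * h2eq
    rw [hΦ]
    have e2 : U g1 h (m + 2) a = f a := by rw [hf]
    simp only [e2]
    linarith
  have hlb : ∀ a > (0:ℝ), h^2/2 * g1 (f a) - h * α * g2 (f a) ≤ Φ a := by
    intro a ha
    have hd := (U_mono (h:=h) hm1 hg10 ha (m + 1) (by omega)).2
    have e : U g1 h (m + 1 + 1) a = f a := by rw [hf]
    rw [e] at hd
    rw [hΦ]
    have e2 : U g1 h (m + 2) a = f a := by rw [hf]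
    simp only [e2]
    linarith
  -- point where Φ < 0
  obtain ⟨x₀, hx₀, hgx₀⟩ := hsurj (α/2) (by positivity)
  have hgx₀' : g1 x₀ = α/2 * g2 x₀ := by
    field_simp at hgx₀
    rw [div_eq_iff (ne_of_gt (g2pos x₀ hx₀))] at hgx₀
    linarith
  obtain ⟨a₀, ha₀mem, ha₀⟩ : ∃ a ∈ Set.Icc (0:ℝ) x₀, f a = x₀ := by
    have := intermediate_value_Icc (le_of_lt hx₀) fcont.continuousOn
      (Set.mem_Icc.mpr ⟨by rw [f0]; exact hx₀.le, fge x₀ hx₀⟩)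
    obtain ⟨a, ha, hfa⟩ := this
    exact ⟨a, ha, hfa⟩
  have ha₀pos : 0 < a₀ := by
    rcases eq_or_lt_of_le ha₀mem.1 with heq | hlt
    · exfalso; rw [← heq, f0] at ha₀; linarith
    · exact hlt
  have hΦ0 : Φ a₀ < 0 := by
    have := hub a₀ ha₀pos
    rw [ha₀, hgx₀'] at this
    have hp : (0:ℝ) < h * α * g2 x₀ := mul_pos (mul_pos hpos hα) (g2pos x₀ hx₀)
    linarith
  -- point where Φ > 0
  obtain ⟨x₁, hx₁, hgx₁⟩ := hsurj (2*α/h + α) (by positivity)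
  have hgx₁' : g1 x₁ = (2*α/h + α) * g2 x₁ := by
    rw [div_eq_iff (ne_of_gt (g2pos x₁ hx₁))] at hgx₁
    linarith
  obtain ⟨a₁, ha₁mem, ha₁⟩ : ∃ a ∈ Set.Icc (0:ℝ) x₁, f a = x₁ := by
    have := intermediate_value_Icc (le_of_lt hx₁) fcont.continuousOn
      (Set.mem_Icc.mpr ⟨by rw [f0]; exact hx₁.le, fge x₁ hx₁⟩)
    obtain ⟨a, ha, hfa⟩ := this
    exact ⟨a, ha, hfa⟩
  have ha₁pos : 0 < a₁ := by
    rcases eq_or_lt_of_le ha₁mem.1 with heq | hlt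
    · exfalso; rw [← heq, f0] at ha₁; linarith
    · exact hlt
  have hΦ1 : 0 < Φ a₁ := by
    have := hlb a₁ ha₁pos
    rw [ha₁, hgx₁'] at this
    have hcomp : h^2/2 * ((2*α/h + α) * g2 x₁) - h * α * g2 x₁ = (h^2 * α / 2) * g2 x₁ := by
      field_simp; ring
    rw [hcomp] at this
    have hp : (0:ℝ) < (h^2 * α / 2) * g2 x₁ :=
      mul_pos (by positivity) (g2pos x₁ hx₁)
    linarith
  -- IVT for Φ
  obtain ⟨a, hapos, hΦa⟩ : ∃ a, 0 < a ∧ Φ a = 0 := by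
    rcases le_total a₀ a₁ with hle | hle
    · obtain ⟨a, hamem, ha⟩ := intermediate_value_Icc hle Φcont.continuousOn
        (Set.mem_Icc.mpr ⟨hΦ0.le, hΦ1.le⟩)
      exact ⟨a, lt_of_lt_of_le ha₀pos hamem.1, ha⟩
    · obtain ⟨a, hamem, ha⟩ := intermediate_value_Icc' hle Φcont.continuousOn
        (Set.mem_Icc.mpr ⟨hΦ0.le, hΦ1.le⟩)
      exact ⟨a, lt_of_lt_of_le ha₁pos hamem.1, ha⟩
  -- construct the solution
  refine ⟨fun k => U g1 h k a, ?_, ?_, ?_, ?_⟩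
  · intro k hk1 _
    exact U_pos hm1 hg10 hapos k hk1
  · show U g1 h 2 a - U g1 h 1 a = h ^ 2 / 2 * g1 (U g1 h 1 a)
    show (a + h ^ 2 / 2 * g1 a) - a = h ^ 2 / 2 * g1 a
    ring
  · intro k hk2 _
    obtain ⟨j, rfl⟩ : ∃ j, k = j + 2 := ⟨k - 2, by omega⟩
    have e1 : j + 2 - 1 = j + 1 := rfl
    rw [e1]
    show U g1 h (j + 3) a - 2 * U g1 h (j + 2) a + U g1 h (j + 1) a
      = h ^ 2 * g1 (U g1 h (j + 2) a)
    show (2 * U g1 h (j + 2) a - U g1 h (j + 1) a + h ^ 2 * g1 (U g1 h (j + 2) a))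
      - 2 * U g1 h (j + 2) a + U g1 h (j + 1) a = h ^ 2 * g1 (U g1 h (j + 2) a)
    ring
  · have e1 : m + 2 - 1 = m + 1 := rfl
    rw [e1]
    rw [hΦ] at hΦa
    simp only [hf] at hΦa
    linarith
end
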